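/- arXiv:1207.5337 — 3 statements merged into one kernel-verified Lean document; each statement's English description precedes it below -/
import Mathlib

section
/- Let (λ_n) satisfy 0 = λ_0 < λ_1 < λ_2 < ⋯ and e^{-σ(λ_n+λ_m)} ≤ C|λ_n - λ_m| for all n ≠ m, with C > 0 and σ ≥ 0. Then for every x > 0, ∑_{n=1}^∞ e^{-2(σ+x)λ_n} ≤ (1 + C/(2x)) · e^{-2λ_1 x}. -/
theorem stmt_3 (lam : ℕ → ℝ) (hlam0 : lam 0 = 0) (hmono : StrictMono lam)
    (C σ : ℝ) (hC : 0 < C) (hσ : 0 ≤ σ)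
    (hsep : ∀ n m : ℕ, n ≠ m → Real.exp (-σ * (lam n + lam m)) ≤ C * |lam n - lam m|)
    (x : ℝ) (hx : 0 < x) :
    ∑' n : ℕ, Real.exp (-2 * (σ + x) * lam (n + 1)) ≤
      (1 + C / (2 * x)) * Real.exp (-2 * lam 1 * x) := by
  have hx2 : (0:ℝ) < 2 * x := by linarith
  have hCx : 0 < C / (2 * x) := div_pos hC hx2
  set f : ℕ → ℝ := fun n => Real.exp (-2 * (σ + x) * lam (n + 1)) with hf
  set G : ℕ → ℝ := fun n => C / (2 * x) * Real.exp (-(2 * x * lam (n + 1))) with hG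
  have hlamnn : ∀ n, 0 ≤ lam n := by
    intro n
    rw [← hlam0]
    exact hmono.monotone (Nat.zero_le n)
  have key : ∀ k : ℕ, f (k + 1) ≤ G k - G (k + 1) := by
    intro k
    have hlt : lam (k + 1) < lam (k + 2) := hmono (by omega)
    have h1 : Real.exp (-(2 * σ * lam (k + 2))) ≤ C * (lam (k + 2) - lam (k + 1)) := by
      have hs := hsep (k + 1) (k + 2) (by omega)
      rw [abs_sub_comm, abs_of_nonneg (by linarith)] at hs
      refine le_trans ?_ hs
      apply Real.exp_le_exp.2
      have := hlamnn (k + 1)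
      nlinarith
    -- exp inequality : (b-a) * exp(-b) ≤ exp(-a) - exp(-b)
    have h2 : 2 * x * (lam (k + 2) - lam (k + 1)) * Real.exp (-(2 * x * lam (k + 2)))
        ≤ Real.exp (-(2 * x * lam (k + 1))) - Real.exp (-(2 * x * lam (k + 2))) := by
      set a := 2 * x * lam (k + 1) with ha
      set b := 2 * x * lam (k + 2) with hbdef
      have hab : b - a + 1 ≤ Real.exp (b - a) := Real.add_one_le_exp _
      have hb : (0:ℝ) < Real.exp (-b) := Real.exp_pos _
      have h3 : (b - a + 1) * Real.exp (-b) ≤ Real.exp (b - a) * Real.exp (-b) :=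
        mul_le_mul_of_nonneg_right hab hb.le
      rw [← Real.exp_add] at h3
      have hba : b - a + -b = -a := by ring
      rw [hba] at h3
      have hba2 : 2 * x * (lam (k + 2) - lam (k + 1)) = b - a := by
        rw [ha, hbdef]; ring
      rw [hba2]
      nlinarith [h3, hb]
    have hfsplit : f (k + 1) = Real.exp (-(2 * σ * lam (k + 2))) * Real.exp (-(2 * x * lam (k + 2))) := by
      rw [hf, ← Real.exp_add]
      ring_nf
    rw [hfsplit]
    have step1 : Real.exp (-(2 * σ * lam (k + 2))) * Real.exp (-(2 * x * lam (k + 2)))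
        ≤ C * (lam (k + 2) - lam (k + 1)) * Real.exp (-(2 * x * lam (k + 2))) :=
      mul_le_mul_of_nonneg_right h1 (Real.exp_pos _).le
    refine step1.trans ?_
    have : G k - G (k + 1) = C / (2 * x) *
        (Real.exp (-(2 * x * lam (k + 1))) - Real.exp (-(2 * x * lam (k + 2)))) := by
      simp only [hG]; ring_nf
    rw [this]
    have h4 := mul_le_mul_of_nonneg_left h2 hCx.le
    calc C * (lam (k + 2) - lam (k + 1)) * Real.exp (-(2 * x * lam (k + 2)))
        = C / (2 * x) * (2 * x * (lam (k + 2) - lam (k + 1)) * Real.exp (-(2 * x * lam (k + 2)))) := by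
          field_simp
      _ ≤ _ := h4
  have hf0 : f 0 ≤ Real.exp (-2 * lam 1 * x) := by
    apply Real.exp_le_exp.2
    have := hlamnn 1
    nlinarith
  have hbound : ∀ N : ℕ, ∑ n ∈ Finset.range N, f n ≤ (1 + C / (2 * x)) * Real.exp (-2 * lam 1 * x) := by
    intro N
    have hRHSpos : 0 ≤ (1 + C / (2 * x)) * Real.exp (-2 * lam 1 * x) := by positivity
    cases N with
    | zero => simpa using hRHSpos
    | succ M =>
      rw [Finset.sum_range_succ']
      have htel : ∑ i ∈ Finset.range M, f (i + 1) ≤ G 0 := by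
        calc ∑ i ∈ Finset.range M, f (i + 1) ≤ ∑ i ∈ Finset.range M, (G i - G (i + 1)) :=
              Finset.sum_le_sum (fun i _ => key i)
          _ = G 0 - G M := Finset.sum_range_sub' G M
          _ ≤ G 0 := by
              have : 0 < G M := mul_pos hCx (Real.exp_pos _)
              linarith
      have hG0 : G 0 = C / (2 * x) * Real.exp (-2 * lam 1 * x) := by
        simp only [hG]; ring_nf
      have : (1 + C / (2 * x)) * Real.exp (-2 * lam 1 * x)
          = C / (2 * x) * Real.exp (-2 * lam 1 * x) + Real.exp (-2 * lam 1 * x) := by ring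
      rw [this]
      exact add_le_add (hG0 ▸ htel) hf0
  exact Real.tsum_le_of_sum_range_le (fun n => (Real.exp_pos _).le) hbound
end

section
/- Let L(s) = ∑_{n=0}^∞ a_n e^{-λ_n s} with 0 = λ_0 < λ_1 < ⋯, ∑|a_n|² < ∞, and e^{-σ(λ_n+λ_m)} ≤ C|λ_n - λ_m| for n ≠ m. Then for every x > 0, ∑_{n=1}^∞ |a_n| e^{-λ_n(σ+x)} ≤ √(1 + C/(2x)) · (∑_{n=1}^∞ |a_n|²)^{1/2} · e^{-λ_1 x}. -/
theorem stmt_4 (lam : ℕ → ℝ) (hlam0 : lam 0 = 0) (hmono : StrictMono lam)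
    (a : ℕ → ℂ) (ha : Summable fun n => ‖a n‖ ^ 2)
    (C σ : ℝ) (hC : 0 < C) (hσ : 0 ≤ σ)
    (hsep : ∀ n m : ℕ, n ≠ m → Real.exp (-σ * (lam n + lam m)) ≤ C * |lam n - lam m|)
    (x : ℝ) (hx : 0 < x) :
    ∑' n : ℕ, ‖a (n + 1)‖ * Real.exp (-lam (n + 1) * (σ + x)) ≤
      Real.sqrt (1 + C / (2 * x)) * Real.sqrt (∑' n : ℕ, ‖a (n + 1)‖ ^ 2) *
        Real.exp (-lam 1 * x) := by
  have hlam1 : 0 < lam 1 := by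
    have := hmono Nat.zero_lt_one; rwa [hlam0] at this
  have hx2 : (0:ℝ) < 2 * x := by linarith
  set h : ℕ → ℝ := fun n => Real.exp (-2 * lam n * x) with hh
  set f : ℕ → ℝ := fun n => Real.exp (-2 * lam n * (σ + x)) with hf
  -- per-term bound for n ≥ 1 (in the form n+1, n)
  have key : ∀ n : ℕ, f (n+1) ≤ C / (2*x) * (h n - h (n+1)) := by
    intro n
    have hlt : lam n < lam (n+1) := hmono (Nat.lt_succ_self n)
    have h1 : Real.exp (-2 * lam (n+1) * σ) ≤ C * (lam (n+1) - lam n) := by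
      have hs := hsep (n+1) n (Nat.succ_ne_self n)
      have hle : Real.exp (-2 * lam (n+1) * σ) ≤ Real.exp (-σ * (lam (n+1) + lam n)) := by
        apply Real.exp_le_exp.mpr; nlinarith [hlt.le]
      rw [abs_of_pos (by linarith : (0:ℝ) < lam (n+1) - lam n)] at hs
      exact hle.trans hs
    have h2 : (lam (n+1) - lam n) * Real.exp (-2 * lam (n+1) * x) ≤ (h n - h (n+1)) / (2*x) := by
      rw [le_div_iff₀ hx2]
      have hexp := Real.add_one_le_exp (2 * x * (lam (n+1) - lam n))
      have hE : Real.exp (-2 * lam n * x) =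
          Real.exp (2 * x * (lam (n+1) - lam n)) * Real.exp (-2 * lam (n+1) * x) := by
        rw [← Real.exp_add]; ring_nf
      simp only [hh]
      nlinarith [Real.exp_pos (-2 * lam (n+1) * x)]
    have hsplit : f (n+1) = Real.exp (-2 * lam (n+1) * σ) * Real.exp (-2 * lam (n+1) * x) := by
      simp only [hf, ← Real.exp_add]; ring_nf
    calc f (n+1) = Real.exp (-2 * lam (n+1) * σ) * Real.exp (-2 * lam (n+1) * x) := hsplit
      _ ≤ (C * (lam (n+1) - lam n)) * Real.exp (-2 * lam (n+1) * x) :=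
          mul_le_mul_of_nonneg_right h1 (Real.exp_pos _).le
      _ = C * ((lam (n+1) - lam n) * Real.exp (-2 * lam (n+1) * x)) := by ring
      _ ≤ C * ((h n - h (n+1)) / (2*x)) := mul_le_mul_of_nonneg_left h2 hC.le
      _ = C / (2*x) * (h n - h (n+1)) := by ring
  have hf1 : f 1 ≤ h 1 := by
    simp only [hf, hh]
    apply Real.exp_le_exp.mpr; nlinarith
  -- partial sums of f (n+1)
  have sumf : ∀ N : ℕ, ∑ n ∈ Finset.range N, f (n+1) ≤ (1 + C/(2*x)) * h 1 := by
    intro N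
    have hh1 : 0 < h 1 := Real.exp_pos _
    cases N with
    | zero => simp; positivity
    | succ M =>
      rw [Finset.sum_range_succ']
      have htel : ∑ i ∈ Finset.range M, f (i+1+1) ≤ C/(2*x) * (h 1 - h (M+1)) := by
        calc ∑ i ∈ Finset.range M, f (i+1+1)
            ≤ ∑ i ∈ Finset.range M, C/(2*x) * (h (i+1) - h (i+1+1)) :=
              Finset.sum_le_sum fun i _ => key (i+1)
          _ = C/(2*x) * ∑ i ∈ Finset.range M, ((fun j => h (j+1)) i - (fun j => h (j+1)) (i+1)) := by
              rw [Finset.mul_sum]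
          _ = C/(2*x) * (h 1 - h (M+1)) := by
              rw [Finset.sum_range_sub' (fun j => h (j+1))]
      have hhM : 0 < h (M+1) := Real.exp_pos _
      have hCx : 0 < C / (2*x) := by positivity
      have : f (0+1) ≤ h 1 := hf1
      nlinarith
  set W : ℝ := (1 + C/(2*x)) * h 1 with hW
  have hh1 : 0 < h 1 := Real.exp_pos _
  have hW0 : 0 ≤ W := by positivity
  -- finset bound for squared weights
  have hWsum : ∀ s : Finset ℕ, ∑ n ∈ s, (Real.exp (-lam (n+1) * (σ + x)))^2 ≤ W := by
    intro s
    obtain ⟨N, hN⟩ := s.exists_nat_subset_range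
    have hsq : ∀ n : ℕ, (Real.exp (-lam (n+1) * (σ + x)))^2 = f (n+1) := by
      intro n; simp only [hf, sq, ← Real.exp_add]; ring_nf
    calc ∑ n ∈ s, (Real.exp (-lam (n+1) * (σ + x)))^2 = ∑ n ∈ s, f (n+1) := by
          exact Finset.sum_congr rfl fun n _ => hsq n
      _ ≤ ∑ n ∈ Finset.range N, f (n+1) :=
          Finset.sum_le_sum_of_subset_of_nonneg hN (fun i _ _ => (Real.exp_pos _).le)
      _ ≤ W := sumf N
  have hT : Summable fun n : ℕ => ‖a (n+1)‖^2 :=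
    ha.comp_injective (fun m n hmn => by omega)
  set T : ℝ := ∑' n : ℕ, ‖a (n+1)‖^2 with hTdef
  have hT0 : 0 ≤ T := tsum_nonneg fun n => sq_nonneg _
  have main : ∀ s : Finset ℕ,
      ∑ n ∈ s, ‖a (n+1)‖ * Real.exp (-lam (n+1) * (σ + x)) ≤ Real.sqrt T * Real.sqrt W := by
    intro s
    have hcs := Real.sum_mul_le_sqrt_mul_sqrt s (fun n => ‖a (n+1)‖)
      (fun n => Real.exp (-lam (n+1) * (σ + x)))
    refine hcs.trans (mul_le_mul ?_ ?_ (Real.sqrt_nonneg _) (Real.sqrt_nonneg _))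
    · exact Real.sqrt_le_sqrt (Summable.sum_le_tsum s (fun i _ => sq_nonneg _) hT)
    · exact Real.sqrt_le_sqrt (hWsum s)
  have hbound := tsum_le_of_sum_le' (L := SummationFilter.unconditional ℕ) (by positivity : (0:ℝ) ≤ Real.sqrt T * Real.sqrt W) main
  have hsqrtW : Real.sqrt W = Real.sqrt (1 + C/(2*x)) * Real.exp (-lam 1 * x) := by
    rw [hW, Real.sqrt_mul (by positivity)]
    congr 1
    have : h 1 = (Real.exp (-lam 1 * x))^2 := by
      simp only [hh, sq, ← Real.exp_add]; ring_nf
    rw [this, Real.sqrt_sq (Real.exp_pos _).le]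
  calc ∑' n : ℕ, ‖a (n + 1)‖ * Real.exp (-lam (n + 1) * (σ + x))
      ≤ Real.sqrt T * Real.sqrt W := hbound
    _ = Real.sqrt (1 + C/(2*x)) * Real.sqrt T * Real.exp (-lam 1 * x) := by
        rw [hsqrtW]; ring
end

section
/- Let L satisfy: L holomorphic on Re(s) > σ, continuous up to Re(s) = σ, |L(s)| ≥ ξ > 0 for Re(s) ≥ σ + D, and for all Re(s) ≥ σ define the half-plane Jensen bound. If L(s) = ∑ a_n e^{-λ_n s} is absolutely convergent on Re(s) = σ with a_0 = 1 (so ‖L‖_1 ≥ 1), then for δ > 0: ∫_0^δ log⁻|L(σ+it)| dt ≤ π(D + δ²/(4D)) · (log ‖L‖_1 − log |L(σ + D + iδ/2)|). -/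
open Complex Metric Real MeasureTheory intervalIntegral

noncomputable section

/-- circle point -/
lemma circ_mem (c : ℂ) {r : ℝ} (hr : 0 < r) (θ : ℝ) :
    c + r * Complex.exp (θ * Complex.I) ∈ closedBall c r := by
  simp only [Metric.mem_closedBall, dist_eq_norm]
  rw [add_sub_cancel_left]
  rw [norm_mul, Complex.norm_exp]
  simp [abs_of_pos hr, hr.le]

/-- Mean value property from Cauchy integral formula. -/
lemma mvpC {f : ℂ → ℂ} {c : ℂ} {r : ℝ} (hr : 0 < r)
    (hf : DifferentiableOn ℂ f (closedBall c r)) :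
    ∫ θ in (0:ℝ)..(2*π), f (c + r * Complex.exp (θ * Complex.I)) = (2*π) * f c := by
  have h := hf.circleIntegral_sub_inv_smul (Metric.mem_ball_self hr)
  rw [circleIntegral] at h
  simp only [deriv_circleMap, smul_eq_mul] at h
  have heq : ∀ θ : ℝ, circleMap 0 r θ * Complex.I * ((circleMap c r θ - c)⁻¹ * f (circleMap c r θ))
      = Complex.I * f (c + r * Complex.exp (θ * Complex.I)) := by
    intro θ
    have h0 : circleMap c r θ - c = circleMap 0 r θ := circleMap_sub_center c r θ
    have h1 : circleMap 0 r θ ≠ 0 := circleMap_ne_center hr.ne'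
    have h2 : circleMap c r θ = c + r * Complex.exp (θ * Complex.I) := by
      simp [circleMap, mul_comm]
    rw [h0, h2]
    field_simp
  rw [intervalIntegral.integral_congr (fun θ _ => heq θ)] at h
  rw [intervalIntegral.integral_const_mul] at h
  have hI : (Complex.I : ℂ) ≠ 0 := Complex.I_ne_zero
  have h2 : (2 * ↑π * Complex.I * f c : ℂ) = Complex.I * (2 * ↑π * f c) := by ring
  rw [h2] at h
  exact mul_left_cancel₀ hI h

lemma contCirc {f : ℂ → ℂ} {c : ℂ} {r : ℝ} (hr : 0 < r)
    (hf : ContinuousOn f (closedBall c r)) :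
    Continuous (fun θ : ℝ => f (c + r * Complex.exp (θ * Complex.I))) := by
  apply hf.comp_continuous
  · continuity
  · exact fun θ => circ_mem c hr θ

lemma mvpRe {f : ℂ → ℂ} {c : ℂ} {r : ℝ} (hr : 0 < r)
    (hf : DifferentiableOn ℂ f (closedBall c r)) :
    ∫ θ in (0:ℝ)..(2*π), (f (c + r * Complex.exp (θ * Complex.I))).re = (2*π) * (f c).re := by
  have hint : IntervalIntegrable (fun θ : ℝ => f (c + r * Complex.exp (θ * Complex.I)))
      MeasureTheory.volume 0 (2*π) := (contCirc hr hf.continuousOn).intervalIntegrable _ _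
  have := Complex.reCLM.intervalIntegral_comp_comm (𝕜 := ℝ) hint
  simp only [Complex.reCLM_apply] at this
  rw [this, mvpC hr hf]
  simp

lemma re_pos_of_near_one {w : ℂ} (h : ‖w - 1‖ < 1) : 0 < w.re := by
  have : |(w - 1).re| ≤ ‖w - 1‖ := Complex.abs_re_le_norm _
  have h2 : (w - 1).re = w.re - 1 := by simp
  rw [h2] at this
  have := abs_le.1 this
  linarith [this.1]

lemma logNormMVP {f : ℂ → ℂ} {c : ℂ} {r : ℝ} (hr : 0 < r)
    (hf : DifferentiableOn ℂ f (closedBall c r))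
    (hsmall : ∀ z ∈ closedBall c r, ‖f z - f c‖ < ‖f c‖) :
    ∫ θ in (0:ℝ)..(2*π), Real.log ‖f (c + r * Complex.exp (θ * Complex.I))‖
      = (2*π) * Real.log ‖f c‖ := by
  have hc0 : f c ≠ 0 := by
    intro h
    have := hsmall c (Metric.mem_closedBall_self hr.le)
    rw [h] at this; simp at this
  have hne : ∀ z ∈ closedBall c r, f z ≠ 0 := by
    intro z hz h0
    have := hsmall z hz
    rw [h0, zero_sub, norm_neg] at this
    exact lt_irrefl _ this
  set g : ℂ → ℂ := fun z => Complex.log (f z / f c) with hgdef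
  have hslit : ∀ z ∈ closedBall c r, f z / f c ∈ Complex.slitPlane := by
    intro z hz
    rw [Complex.mem_slitPlane_iff]
    left
    apply re_pos_of_near_one
    rw [div_sub_one hc0, norm_div]
    rw [div_lt_one (norm_pos_iff.2 hc0)]
    exact hsmall z hz
  have hg : DifferentiableOn ℂ g (closedBall c r) :=
    DifferentiableOn.clog (hf.div_const _) hslit
  have hre : ∀ z ∈ closedBall c r, (g z).re = Real.log ‖f z‖ - Real.log ‖f c‖ := by
    intro z hz
    rw [hgdef]
    simp only [Complex.log_re]
    rw [norm_div]
    rw [Real.log_div (by simpa using hne z hz) (by simpa using hc0)]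
  have h1 := mvpRe hr hg
  have h2 : (g c).re = 0 := by
    rw [hre c (Metric.mem_closedBall_self hr.le)]; ring
  rw [h2, mul_zero] at h1
  have h3 : ∀ θ ∈ Set.uIcc (0:ℝ) (2*π),
      (g (c + r * Complex.exp (θ * Complex.I))).re
        = Real.log ‖f (c + r * Complex.exp (θ * Complex.I))‖ - Real.log ‖f c‖ := by
    intro θ _
    exact hre _ (circ_mem c hr θ)
  rw [intervalIntegral.integral_congr h3] at h1
  have hcont : Continuous (fun θ : ℝ => Real.log ‖f (c + r * Complex.exp (θ * Complex.I))‖) := by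
    apply Continuous.log
    · exact (contCirc hr hf.continuousOn).norm
    · intro θ
      simpa using hne _ (circ_mem c hr θ)
  have hint1 : IntervalIntegrable (fun θ : ℝ => Real.log ‖f (c + r * Complex.exp (θ * Complex.I))‖)
      MeasureTheory.volume 0 (2*π) := hcont.intervalIntegrable _ _
  rw [intervalIntegral.integral_sub hint1 (intervalIntegrable_const)] at h1
  rw [intervalIntegral.integral_const] at h1
  simp only [smul_eq_mul, sub_zero] at h1
  have : (2*π - 0) * Real.log ‖f c‖ = 2*π * Real.log ‖f c‖ := by ring
  linarith [h1]

/-- Half-plane Poisson kernel (up to normalization). -/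
def Pker (σ : ℝ) (z : ℂ) (t : ℝ) : ℝ := (z.re - σ) / ((z.re - σ)^2 + (z.im - t)^2) / π

lemma Pker_eq_re (σ : ℝ) (z : ℂ) (t : ℝ) :
    Pker σ z t = ((z - (σ + t*Complex.I))⁻¹).re / π := by
  rw [Complex.inv_re, Pker]
  congr 2
  · simp
  · rw [Complex.normSq_apply]
    simp
    ring

lemma Pker_nonneg {σ : ℝ} {z : ℂ} (h : σ ≤ z.re) (t : ℝ) : 0 ≤ Pker σ z t := by
  unfold Pker
  apply div_nonneg _ Real.pi_pos.le
  apply div_nonneg (by linarith) (by positivity)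

lemma Pker_MVP {σ : ℝ} {c : ℂ} {r : ℝ} (hr : 0 < r) (hc : σ + r < c.re) (t : ℝ) :
    ∫ θ in (0:ℝ)..(2*π), Pker σ (c + r * Complex.exp (θ * Complex.I)) t
      = (2*π) * Pker σ c t := by
  have hf : DifferentiableOn ℂ (fun z => (z - (σ + t*Complex.I))⁻¹) (closedBall c r) := by
    apply DifferentiableOn.inv
    · exact (differentiable_id.sub_const _).differentiableOn
    · intro z hz
      intro h0
      rw [sub_eq_zero] at h0
      have hre : z.re = σ := by rw [h0]; simp
      have : |(z - c).re| ≤ ‖z - c‖ := Complex.abs_re_le_norm _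
      rw [Complex.sub_re] at this
      rw [mem_closedBall, dist_eq_norm] at hz
      have := abs_le.1 (this.trans hz)
      rw [hre] at this
      linarith [this.1]
  have h := mvpRe hr hf
  calc ∫ θ in (0:ℝ)..(2*π), Pker σ (c + r * Complex.exp (θ * Complex.I)) t
      = ∫ θ in (0:ℝ)..(2*π),
          ((c + r * Complex.exp (θ * Complex.I) - (σ + t*Complex.I))⁻¹).re / π := by
        apply intervalIntegral.integral_congr
        intro θ _; exact Pker_eq_re σ _ t
    _ = (∫ θ in (0:ℝ)..(2*π),
          ((c + r * Complex.exp (θ * Complex.I) - (σ + t*Complex.I))⁻¹).re) / π := by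
        rw [intervalIntegral.integral_div]
    _ = (2*π) * (((c - (σ + t*Complex.I))⁻¹).re / π) := by rw [h]; ring
    _ = (2*π) * Pker σ c t := by rw [Pker_eq_re]

lemma Pker_integral {σ : ℝ} {z : ℂ} (hx : σ < z.re) (a b : ℝ) :
    ∫ t in a..b, Pker σ z t
      = (Real.arctan ((b - z.im)/(z.re - σ)) - Real.arctan ((a - z.im)/(z.re - σ)))/π := by
  set x := z.re - σ with hxdef
  have hx0 : 0 < x := by simp [hxdef]; linarith
  have hderiv : ∀ t ∈ Set.uIcc a b,
      HasDerivAt (fun t : ℝ => Real.arctan ((t - z.im)/x) / π) (Pker σ z t) t := by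
    intro t _
    have h1 : HasDerivAt (fun t : ℝ => (t - z.im)/x) (1/x) t := by
      simpa using ((hasDerivAt_id t).sub_const z.im).div_const x
    have h2 := (Real.hasDerivAt_arctan ((t - z.im)/x)).comp t h1
    have h3 := h2.div_const π
    refine h3.congr_deriv ?_
    unfold Pker
    rw [hxdef] at *
    field_simp
    ring
  have hcont : Continuous (fun t : ℝ => Pker σ z t) := by
    unfold Pker
    exact Continuous.div_const
      (Continuous.div continuous_const (by continuity) (fun t => by positivity)) π
  rw [intervalIntegral.integral_eq_sub_of_hasDerivAt hderiv (hcont.intervalIntegrable _ _)]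
  ring

lemma Pker_int_le_one {σ : ℝ} {z : ℂ} (hx : σ < z.re) (a b : ℝ) :
    ∫ t in a..b, Pker σ z t ≤ 1 := by
  rw [Pker_integral hx a b]
  rw [div_le_one Real.pi_pos]
  have h1 := Real.arctan_lt_pi_div_two ((b - z.im)/(z.re - σ))
  have h2 := Real.neg_pi_div_two_lt_arctan ((a - z.im)/(z.re - σ))
  linarith

lemma Pker_contOn (σ : ℝ) : ContinuousOn (fun p : ℂ × ℝ => Pker σ p.1 p.2)
    {p : ℂ × ℝ | σ < p.1.re} := by
  unfold Pker
  have h1 : ContinuousOn (fun p : ℂ × ℝ =>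
      (p.1.re - σ) / ((p.1.re - σ)^2 + (p.1.im - p.2)^2)) {p : ℂ × ℝ | σ < p.1.re} := by
    apply ContinuousOn.div (by fun_prop) (by fun_prop)
    intro p hp
    have h2 : σ < p.1.re := hp
    have h3 : 0 < (p.1.re - σ)^2 := by nlinarith
    nlinarith [sq_nonneg (p.1.im - p.2)]
  exact h1.div_const π

lemma Pker_le_inv_dist {σ : ℝ} {z : ℂ} (hx : σ < z.re) (t : ℝ) :
    Pker σ z t ≤ 1/(π * ‖z - (σ + t*Complex.I)‖) := by
  set ζ := z - (σ + t*Complex.I) with hζ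
  have hre : ζ.re = z.re - σ := by rw [hζ]; simp
  have him : ζ.im = z.im - t := by rw [hζ]; simp
  have hnorm : ‖ζ‖^2 = (z.re - σ)^2 + (z.im - t)^2 := by
    rw [← hre, ← him, Complex.sq_norm, Complex.normSq_apply]; ring
  have hζpos : 0 < ‖ζ‖ := by
    have : ζ.re ≠ 0 := by rw [hre]; linarith
    have : ζ ≠ 0 := fun h => this (by rw [h]; simp)
    exact norm_pos_iff.2 this
  have hle : z.re - σ ≤ ‖ζ‖ := by
    rw [← hre]
    exact (le_abs_self _).trans (Complex.abs_re_le_norm ζ)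
  unfold Pker
  rw [div_div]
  rw [div_le_div_iff₀ (by rw [← hnorm]; exact mul_pos (pow_pos hζpos 2) Real.pi_pos)
    (mul_pos Real.pi_pos hζpos)]
  nlinarith [mul_nonneg (mul_nonneg Real.pi_pos.le hζpos.le) (sub_nonneg.2 hle), hnorm,
    Real.pi_pos]

section Usec

variable {σ δ Cφ : ℝ} {φ : ℝ → ℝ}

/-- The Poisson-type comparison integral. -/
def Uc (σ δ : ℝ) (φ : ℝ → ℝ) (z : ℂ) : ℝ := ∫ t in (0:ℝ)..δ, φ t * Pker σ z t

lemma Pker_contT {σ : ℝ} {z : ℂ} (hx : σ < z.re) : Continuous (fun t : ℝ => Pker σ z t) := by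
  unfold Pker
  apply Continuous.div_const
  apply Continuous.div continuous_const (by continuity)
  intro t
  have h3 : 0 < (z.re - σ)^2 := by nlinarith
  nlinarith [sq_nonneg (z.im - t)]

lemma Uc_cont (hφc : Continuous φ) :
    ContinuousOn (Uc σ δ φ) {z : ℂ | σ < z.re} := by
  rw [continuousOn_iff_continuous_restrict]
  have hf : Continuous (Function.uncurry
      (fun (z : {z : ℂ | σ < z.re}) (t : ℝ) => φ t * Pker σ (z : ℂ) t)) := by
    apply Continuous.mul
    · exact hφc.comp continuous_snd
    · show Continuous ((fun p : ℂ × ℝ => Pker σ p.1 p.2) ∘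
        (fun p : {z : ℂ | σ < z.re} × ℝ => ((p.1 : ℂ), p.2)))
      exact (Pker_contOn σ).comp_continuous (by continuity) (fun p => p.1.2)
  exact intervalIntegral.continuous_parametric_intervalIntegral_of_continuous' hf 0 δ

lemma Uc_integrand_intble (hφc : Continuous φ) {z : ℂ} (hz : σ < z.re) (a b : ℝ) :
    IntervalIntegrable (fun t => φ t * Pker σ z t) MeasureTheory.volume a b :=
  (hφc.mul (Pker_contT hz)).intervalIntegrable _ _

lemma Uc_nonneg (hφc : Continuous φ) (hδ : 0 < δ) (hφ0 : ∀ t, 0 ≤ φ t) {z : ℂ} (hz : σ < z.re) :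
    0 ≤ Uc σ δ φ z := by
  apply intervalIntegral.integral_nonneg hδ.le
  intro t _
  exact mul_nonneg (hφ0 t) (Pker_nonneg hz.le t)

lemma Uc_le (hφc : Continuous φ) (hδ : 0 < δ) (hφ0 : ∀ t, 0 ≤ φ t) (hφb : ∀ t, φ t ≤ Cφ)
    {z : ℂ} (hz : σ < z.re) : Uc σ δ φ z ≤ Cφ := by
  have hC : 0 ≤ Cφ := (hφ0 0).trans (hφb 0)
  calc Uc σ δ φ z ≤ ∫ t in (0:ℝ)..δ, Cφ * Pker σ z t := by
        apply intervalIntegral.integral_mono_on hδ.le (Uc_integrand_intble hφc hz 0 δ)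
          ((continuous_const.mul (Pker_contT hz)).intervalIntegrable _ _)
        intro t _
        exact mul_le_mul_of_nonneg_right (hφb t) (Pker_nonneg hz.le t)
    _ = Cφ * ∫ t in (0:ℝ)..δ, Pker σ z t := intervalIntegral.integral_const_mul _ _
    _ ≤ Cφ * 1 := mul_le_mul_of_nonneg_left (Pker_int_le_one hz 0 δ) hC
    _ = Cφ := mul_one Cφ

lemma Uc_far (hφc : Continuous φ) (hδ : 0 < δ) (hφ0 : ∀ t, 0 ≤ φ t) (hφb : ∀ t, φ t ≤ Cφ)
    {z : ℂ} (hz : σ < z.re) {d : ℝ} (hd : 0 < d)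
    (h : ∀ t ∈ Set.Icc (0:ℝ) δ, d ≤ ‖z - (σ + t*Complex.I)‖) :
    Uc σ δ φ z ≤ Cφ * δ / (π * d) := by
  have hC : 0 ≤ Cφ := (hφ0 0).trans (hφb 0)
  calc Uc σ δ φ z ≤ ∫ t in (0:ℝ)..δ, Cφ * (1/(π * d)) := by
        apply intervalIntegral.integral_mono_on hδ.le (Uc_integrand_intble hφc hz 0 δ)
          (intervalIntegrable_const)
        intro t ht
        have h1 := Pker_le_inv_dist hz t
        have h2 : 1/(π * ‖z - (σ + t*Complex.I)‖) ≤ 1/(π * d) := by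
          apply one_div_le_one_div_of_le (by positivity)
          exact mul_le_mul_of_nonneg_left (h t ht) Real.pi_pos.le
        calc φ t * Pker σ z t ≤ Cφ * Pker σ z t :=
              mul_le_mul_of_nonneg_right (hφb t) (Pker_nonneg hz.le t)
          _ ≤ Cφ * (1/(π * d)) := mul_le_mul_of_nonneg_left (h1.trans h2) hC
    _ = Cφ * δ / (π * d) := by
        rw [intervalIntegral.integral_const]
        simp
        ring

lemma Uc_MVP (hφc : Continuous φ) (hδ : 0 < δ) {c : ℂ} {r : ℝ} (hr : 0 < r)
    (hc : σ + r < c.re) :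
    ∫ θ in (0:ℝ)..(2*π), Uc σ δ φ (c + r * Complex.exp (θ * Complex.I))
      = (2*π) * Uc σ δ φ c := by
  have hcirc : ∀ θ : ℝ, σ < (c + r * Complex.exp (θ * Complex.I)).re := by
    intro θ
    have h1 := circ_mem c hr θ
    rw [mem_closedBall, dist_eq_norm] at h1
    have h2 : |(c + r * Complex.exp (θ * Complex.I) - c).re| ≤ r :=
      (Complex.abs_re_le_norm _).trans h1
    rw [Complex.sub_re] at h2
    linarith [(abs_le.1 h2).1]
  have hjoint : Continuous (fun p : ℝ × ℝ =>
      φ p.2 * Pker σ (c + r * Complex.exp (p.1 * Complex.I)) p.2) := by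
    apply Continuous.mul (hφc.comp continuous_snd)
    show Continuous ((fun p : ℂ × ℝ => Pker σ p.1 p.2) ∘
      (fun p : ℝ × ℝ => ((c + r * Complex.exp (p.1 * Complex.I) : ℂ), p.2)))
    exact (Pker_contOn σ).comp_continuous (by continuity) (fun p => hcirc p.1)
  have h2π : (0:ℝ) ≤ 2*π := by positivity
  rw [intervalIntegral.integral_of_le h2π]
  have hUeq : ∀ θ : ℝ, Uc σ δ φ (c + r * Complex.exp (θ * Complex.I))
      = ∫ t in Set.Ioc (0:ℝ) δ, φ t * Pker σ (c + r * Complex.exp (θ * Complex.I)) t := by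
    intro θ
    rw [Uc, intervalIntegral.integral_of_le hδ.le]
  simp only [hUeq]
  have hint : MeasureTheory.Integrable
      (Function.uncurry (fun (θ : ℝ) (t : ℝ) => φ t * Pker σ (c + r * Complex.exp (θ * Complex.I)) t))
      ((MeasureTheory.volume.restrict (Set.Ioc (0:ℝ) (2*π))).prod
        (MeasureTheory.volume.restrict (Set.Ioc (0:ℝ) δ))) := by
    rw [MeasureTheory.Measure.prod_restrict]
    apply MeasureTheory.IntegrableOn.mono_set
      (hjoint.continuousOn.integrableOn_compact (isCompact_Icc.prod isCompact_Icc))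
    exact Set.prod_mono Set.Ioc_subset_Icc_self Set.Ioc_subset_Icc_self
  rw [MeasureTheory.integral_integral_swap hint]
  have hinner : ∀ t : ℝ,
      (∫ θ in Set.Ioc (0:ℝ) (2*π), φ t * Pker σ (c + r * Complex.exp (θ * Complex.I)) t)
        = φ t * ((2*π) * Pker σ c t) := by
    intro t
    rw [← intervalIntegral.integral_of_le h2π]
    rw [intervalIntegral.integral_const_mul]
    rw [Pker_MVP hr hc t]
  simp only [hinner]
  rw [← intervalIntegral.integral_of_le hδ.le]
  rw [Uc]
  rw [← intervalIntegral.integral_const_mul]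
  apply intervalIntegral.integral_congr
  intro t _
  ring

lemma Uc_boundary (hφc : Continuous φ) (hδ : 0 < δ) (hφ0 : ∀ t, 0 ≤ φ t) (hφb : ∀ t, φ t ≤ Cφ)
    (y₀ : ℝ) {ε : ℝ} (hε : 0 < ε) :
    ∃ η > 0, ∃ x₀ > 0, ∀ z : ℂ, σ < z.re → z.re < σ + x₀ → |z.im - y₀| < η →
      Uc σ δ φ z ≤ φ y₀ + ε := by
  have hC : 0 ≤ Cφ := (hφ0 0).trans (hφb 0)
  obtain ⟨η₁, hη₁, hφnear⟩ : ∃ η₁ > 0, ∀ t, |t - y₀| ≤ 2*η₁ → φ t ≤ φ y₀ + ε/2 := by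
    obtain ⟨d, hd, hball⟩ := Metric.continuous_iff.1 hφc y₀ (ε/2) (by linarith)
    refine ⟨d/3, by linarith, fun t ht => ?_⟩
    have h1 : dist t y₀ < d := by rw [Real.dist_eq]; linarith
    have h2 := hball t h1
    rw [Real.dist_eq] at h2
    linarith [(abs_le.1 h2.le).2]
  set x₀ := η₁^2 * π * ε / (2 * (Cφ + 1) * δ) with hx₀def
  have hx₀ : 0 < x₀ := by
    apply div_pos
    · positivity
    · positivity
  refine ⟨η₁, hη₁, x₀, hx₀, fun z hz1 hz2 hz3 => ?_⟩
  set x := z.re - σ with hxdef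
  have hx : 0 < x := by simp [hxdef]; linarith
  have hptwise : ∀ t ∈ Set.Icc (0:ℝ) δ,
      φ t * Pker σ z t ≤ (φ y₀ + ε/2) * Pker σ z t + Cφ * x₀ / (η₁^2 * π) := by
    intro t ht
    by_cases hcase : |t - y₀| ≤ 2*η₁
    · have h1 := hφnear t hcase
      have h2 : φ t * Pker σ z t ≤ (φ y₀ + ε/2) * Pker σ z t :=
        mul_le_mul_of_nonneg_right h1 (Pker_nonneg hz1.le t)
      have h3 : 0 ≤ Cφ * x₀ / (η₁^2 * π) := by positivity
      linarith
    · push_neg at hcase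
      have him : η₁ ≤ |z.im - t| := by
        have := abs_sub_abs_le_abs_sub (t - y₀) (z.im - y₀)
        have habs : |t - y₀ - (z.im - y₀)| = |z.im - t| := by
          rw [show t - y₀ - (z.im - y₀) = -(z.im - t) by ring, abs_neg]
        rw [habs] at this
        linarith
      have hP : Pker σ z t ≤ x / η₁^2 / π := by
        unfold Pker
        rw [← hxdef]
        have hd1 : (0:ℝ) < η₁^2 := by positivity
        have hd2 : η₁^2 ≤ x^2 + (z.im - t)^2 := by
          have h9 := pow_le_pow_left₀ hη₁.le him 2
          rw [_root_.sq_abs] at h9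
          nlinarith [sq_nonneg x]
        rw [div_div, div_div]
        rw [div_le_div_iff₀ (mul_pos (by nlinarith [sq_nonneg (z.im - t)]) Real.pi_pos)
          (by positivity)]
        nlinarith [mul_le_mul_of_nonneg_left hd2 (mul_nonneg hx.le Real.pi_pos.le)]
      have h4 : φ t * Pker σ z t ≤ Cφ * (x / η₁^2 / π) := by
        calc φ t * Pker σ z t ≤ Cφ * Pker σ z t :=
              mul_le_mul_of_nonneg_right (hφb t) (Pker_nonneg hz1.le t)
          _ ≤ Cφ * (x / η₁^2 / π) := mul_le_mul_of_nonneg_left hP hC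
      have h5 : Cφ * (x / η₁^2 / π) ≤ Cφ * x₀ / (η₁^2 * π) := by
        rw [div_div, mul_div_assoc]
        have h5a : x ≤ x₀ := by linarith
        have h5b : (0:ℝ) < η₁^2 * π := by positivity
        apply mul_le_mul_of_nonneg_left _ hC
        rw [div_le_div_iff₀ h5b h5b]
        nlinarith
      have h6 : 0 ≤ (φ y₀ + ε/2) * Pker σ z t := by
        apply mul_nonneg _ (Pker_nonneg hz1.le t)
        linarith [hφ0 y₀]
      linarith
  calc Uc σ δ φ z ≤ ∫ t in (0:ℝ)..δ, ((φ y₀ + ε/2) * Pker σ z t + Cφ * x₀ / (η₁^2 * π)) := by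
        apply intervalIntegral.integral_mono_on hδ.le (Uc_integrand_intble hφc hz1 0 δ)
        · exact ((continuous_const.mul (Pker_contT hz1)).add continuous_const).intervalIntegrable _ _
        · intro t ht; exact hptwise t ht
    _ = (φ y₀ + ε/2) * (∫ t in (0:ℝ)..δ, Pker σ z t) + (Cφ * x₀ / (η₁^2 * π)) * δ := by
        rw [intervalIntegral.integral_add (f := fun t => (φ y₀ + ε/2) * Pker σ z t) (((continuous_const.mul (Pker_contT hz1))).intervalIntegrable _ _)
          intervalIntegrable_const]
        rw [intervalIntegral.integral_const_mul, intervalIntegral.integral_const]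
        simp
        ring
    _ ≤ (φ y₀ + ε/2) * 1 + ε/2 := by
        have hb1 : (φ y₀ + ε/2) * (∫ t in (0:ℝ)..δ, Pker σ z t) ≤ (φ y₀ + ε/2) * 1 :=
          mul_le_mul_of_nonneg_left (Pker_int_le_one hz1 0 δ) (by linarith [hφ0 y₀])
        have hb2 : (Cφ * x₀ / (η₁^2 * π)) * δ ≤ ε/2 := by
          rw [hx₀def]
          rw [div_mul_eq_mul_div, div_le_iff₀ (by positivity)]
          have h7 : Cφ * (η₁ ^ 2 * π * ε / (2 * (Cφ + 1) * δ)) * δ =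
              (Cφ / (Cφ + 1)) * (ε/2) * (η₁^2 * π) := by
            field_simp
          rw [h7]
          have h8 : Cφ / (Cφ + 1) ≤ 1 := by
            rw [div_le_one (by linarith)]; linarith
          nlinarith [mul_nonneg (mul_nonneg (sub_nonneg.2 h8)
            (by linarith : (0:ℝ) ≤ ε/2)) (by positivity : (0:ℝ) ≤ η₁^2*π)]
        linarith
    _ ≤ φ y₀ + ε := by linarith

end Usec

lemma circ_re_ge {z : ℂ} {r : ℝ} (hr : 0 < r) (θ : ℝ) :
    z.re - r ≤ (z + r * Complex.exp (θ * Complex.I)).re := by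
  have h1 := circ_mem z hr θ
  rw [mem_closedBall, dist_eq_norm] at h1
  have h2 : |(z + r * Complex.exp (θ * Complex.I) - z).re| ≤ r :=
    (Complex.abs_re_le_norm _).trans h1
  rw [Complex.sub_re] at h2
  linarith [(abs_le.1 h2).1]

/-- Maximum principle on the half plane, for subharmonic functions with boundary
control and decay along big circles. -/
lemma maxPrinciple {σ : ℝ} {W : ℂ → ℝ} {B Mb : ℝ} (c₀ : ℂ)
    (hWcont : ContinuousOn W {z : ℂ | σ < z.re})
    (hsub : ∀ z : ℂ, σ < z.re → ∃ r₀ : ℝ, 0 < r₀ ∧ ∀ r : ℝ, 0 < r → r < r₀ →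
      W z * (2*π) ≤ ∫ θ in (0:ℝ)..(2*π), W (z + r * Complex.exp (θ * Complex.I)))
    (hbdd : ∀ z : ℂ, σ < z.re → W z ≤ Mb)
    (hbound : ∀ ζ : ℂ, ζ.re = σ → ∀ ε, 0 < ε → ∃ V ∈ nhds ζ, ∀ z ∈ V, σ < z.re → W z ≤ B + ε)
    (hfar : ∀ ε, 0 < ε → ∃ R₀, 0 < R₀ ∧ ∀ z : ℂ, σ < z.re → R₀ ≤ dist z c₀ → W z ≤ B + ε) :
    ∀ z : ℂ, σ < z.re → W z ≤ B := by
  have hopen : IsOpen {z : ℂ | σ < z.re} := isOpen_lt continuous_const Complex.continuous_re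
  intro z₁ hz₁
  by_contra hcon
  push_neg at hcon
  set ε := (W z₁ - B)/2 with hεdef
  have hε : 0 < ε := by simp [hεdef]; linarith
  obtain ⟨R₀, hR₀, hfarR⟩ := hfar ε hε
  set R := max R₀ (dist z₁ c₀ + 1) with hRdef
  have hRpos : 0 < R := lt_of_lt_of_le hR₀ (le_max_left _ _)
  set A : Set ℂ := {z : ℂ | σ < z.re ∧ dist z c₀ ≤ R} with hAdef
  have hz₁A : z₁ ∈ A := ⟨hz₁, by
    have := le_max_right R₀ (dist z₁ c₀ + 1); linarith⟩
  set Abar : Set ℂ := {z : ℂ | σ ≤ z.re} ∩ closedBall c₀ R with hAbardef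
  have hAbarclosed : IsClosed Abar :=
    (isClosed_le continuous_const Complex.continuous_re).inter Metric.isClosed_closedBall
  have hAbarcompact : IsCompact Abar :=
    (isCompact_closedBall c₀ R).inter_left (isClosed_le continuous_const Complex.continuous_re)
  have hAsub : A ⊆ Abar := fun z hz => ⟨hz.1.le, hz.2⟩
  have hWA_bdd : BddAbove (W '' A) := ⟨Mb, by rintro y ⟨z, hz, rfl⟩; exact hbdd z hz.1⟩
  have hWA_ne : (W '' A).Nonempty := ⟨W z₁, z₁, hz₁A, rfl⟩
  set s := sSup (W '' A) with hsdef
  have hz₁s : W z₁ ≤ s := le_csSup hWA_bdd ⟨z₁, hz₁A, rfl⟩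
  have hsgt : B + ε < s := by
    have : W z₁ = B + 2*ε := by rw [hεdef]; ring
    linarith
  have harc : ∀ z ∈ A, R ≤ dist z c₀ → W z ≤ B + ε := fun z hz hdist =>
    hfarR z hz.1 (le_trans (le_max_left _ _) hdist)
  have hleS : ∀ z ∈ A, W z ≤ s := fun z hz => le_csSup hWA_bdd ⟨z, hz, rfl⟩
  -- maximizing sequence
  have hseq : ∀ n : ℕ, ∃ z ∈ A, s - 1/(n+1) < W z := by
    intro n
    have hlt : s - 1/(n+1) < s := by
      have : (0:ℝ) < 1/(n+1) := by positivity
      linarith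
    obtain ⟨y, ⟨z, hzA, rfl⟩, hy⟩ := exists_lt_of_lt_csSup hWA_ne hlt
    exact ⟨z, hzA, hy⟩
  choose zs hzsA hzslt using hseq
  obtain ⟨zst, hzstmem, g, hg, hgt⟩ := hAbarcompact.tendsto_subseq (fun n => hAsub (hzsA n))
  have hgk : ∀ k : ℕ, (k:ℝ) + 1 ≤ (g k : ℝ) + 1 := by
    intro k
    have h : k ≤ g k := hg.le_apply
    have : (k:ℝ) ≤ (g k : ℝ) := by exact_mod_cast h
    linarith
  have hWlim : Filter.Tendsto (fun k => W (zs (g k))) Filter.atTop (nhds s) := by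
    apply tendsto_of_tendsto_of_tendsto_of_le_of_le
      (g := fun k : ℕ => s - 1/((g k : ℝ)+1)) (h := fun _ : ℕ => s)
    · have h1 : Filter.Tendsto (fun k : ℕ => 1/((g k : ℝ)+1)) Filter.atTop (nhds 0) := by
        apply squeeze_zero (fun k => by positivity) (g := fun k : ℕ => 1/((k:ℝ)+1))
        · intro k
          apply one_div_le_one_div_of_le (by positivity) (hgk k)
        · exact tendsto_one_div_add_atTop_nhds_zero_nat
      have := Filter.Tendsto.sub (tendsto_const_nhds (x := s)) h1
      simpa using this
    · exact tendsto_const_nhds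
    · exact fun k => (hzslt (g k)).le
    · exact fun k => hleS _ (hzsA (g k))
  have hσle : σ ≤ zst.re := hzstmem.1
  rcases eq_or_lt_of_le hσle with hre | hre
  · -- boundary case
    obtain ⟨V, hV, hVb⟩ := hbound zst hre.symm ε hε
    have hev : ∀ᶠ k in Filter.atTop, W (zs (g k)) ≤ B + ε := by
      filter_upwards [hgt.eventually_mem hV] with k hk
      exact hVb _ hk (hzsA (g k)).1
    have : s ≤ B + ε := le_of_tendsto hWlim hev
    linarith
  · -- interior case
    have hzstA : zst ∈ A := ⟨hre, hzstmem.2⟩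
    have hWzst : W zst = s := by
      have hAt : ContinuousAt W zst := hWcont.continuousAt (hopen.mem_nhds hre)
      exact tendsto_nhds_unique (hAt.tendsto.comp hgt) hWlim
    set S0 : Set ℂ := {z : ℂ | z ∈ A ∧ W z = s} with hS0def
    have hS0ne : S0.Nonempty := ⟨zst, hzstA, hWzst⟩
    have hScl : closure S0 ⊆ Abar :=
      closure_minimal (fun z hz => hAsub hz.1) hAbarclosed
    have hSccompact : IsCompact (closure S0) :=
      IsCompact.of_isClosed_subset hAbarcompact isClosed_closure hScl
    obtain ⟨zb, hzbmem, hzbmax⟩ := hSccompact.exists_isMaxOn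
      ⟨zst, subset_closure ⟨hzstA, hWzst⟩⟩ Complex.continuous_re.continuousOn
    have hzble : σ ≤ zb.re := (hScl hzbmem).1
    have hzbball : dist zb c₀ ≤ R := (hScl hzbmem).2
    have hzbre : σ < zb.re := by
      rcases eq_or_lt_of_le hzble with h | h
      · exfalso
        obtain ⟨V, hV, hVb⟩ := hbound zb h.symm ε hε
        obtain ⟨w, hwV, hwS0⟩ := mem_closure_iff_nhds.1 hzbmem V hV
        have h1 := hVb w hwV hwS0.1.1
        rw [hwS0.2] at h1
        linarith
      · exact h
    have hWzb : W zb = s := by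
      have hAt : ContinuousAt W zb := hWcont.continuousAt (hopen.mem_nhds hzbre)
      have h1 : W zb ∈ closure (W '' S0) := mem_closure_image hAt hzbmem
      have h2 : closure (W '' S0) ⊆ {s} := by
        apply closure_minimal _ isClosed_singleton
        rintro y ⟨w, hw, rfl⟩
        exact hw.2
      exact h2 h1
    have hzbS0 : zb ∈ S0 := ⟨⟨hzbre, hzbball⟩, hWzb⟩
    have hzbdist : dist zb c₀ < R := by
      rcases lt_or_eq_of_le hzbball with h | h
      · exact h
      · exfalso
        have := harc zb hzbS0.1 h.symm.le
        linarith [hWzb, hsgt]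
    obtain ⟨r₀, hr₀, hsubm⟩ := hsub zb hzbre
    set r : ℝ := min (min r₀ (zb.re - σ)) (R - dist zb c₀) / 2 with hrdef
    have hrlt : 0 < r ∧ r < r₀ ∧ r < zb.re - σ ∧ r < R - dist zb c₀ := by
      have hm : 0 < min (min r₀ (zb.re - σ)) (R - dist zb c₀) := by
        apply lt_min (lt_min hr₀ (by linarith)) (by linarith)
      refine ⟨by positivity, ?_, ?_, ?_⟩
      · have := min_le_left (min r₀ (zb.re - σ)) (R - dist zb c₀)
        have := min_le_left r₀ (zb.re - σ)
        rw [hrdef]; linarith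
      · have := min_le_left (min r₀ (zb.re - σ)) (R - dist zb c₀)
        have := min_le_right r₀ (zb.re - σ)
        rw [hrdef]; linarith
      · have := min_le_right (min r₀ (zb.re - σ)) (R - dist zb c₀)
        rw [hrdef]; linarith
    have hcircA : ∀ θ : ℝ, zb + r * Complex.exp (θ * Complex.I) ∈ A := by
      intro θ
      constructor
      · have := circ_re_ge (z := zb) hrlt.1 θ
        linarith [hrlt.2.2.1]
      · have h1 : dist (zb + r * Complex.exp (θ * Complex.I)) zb ≤ r := by
          have := circ_mem zb hrlt.1 θ
          rwa [mem_closedBall] at this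
        calc dist (zb + r * Complex.exp (θ * Complex.I)) c₀
            ≤ dist (zb + r * Complex.exp (θ * Complex.I)) zb + dist zb c₀ := dist_triangle _ _ _
          _ ≤ r + dist zb c₀ := by linarith
          _ ≤ R := by linarith [hrlt.2.2.2]
    have hWcirc_cont : Continuous (fun θ : ℝ => W (zb + r * Complex.exp (θ * Complex.I))) := by
      show Continuous (W ∘ (fun θ : ℝ => zb + r * Complex.exp (θ * Complex.I)))
      refine hWcont.comp_continuous ?_ (fun θ => (hcircA θ).1)
      exact continuous_const.add (continuous_const.mul
        (Complex.continuous_exp.comp (Complex.continuous_ofReal.mul continuous_const)))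
    have hint := hsubm r hrlt.1 hrlt.2.1
    rw [hWzb] at hint
    have hFint : (∫ θ in (0:ℝ)..(2*π), (s - W (zb + r * Complex.exp (θ * Complex.I)))) ≤ 0 := by
      rw [intervalIntegral.integral_sub intervalIntegrable_const
        (hWcirc_cont.intervalIntegrable _ _)]
      rw [intervalIntegral.integral_const]
      simp only [smul_eq_mul, sub_zero]
      linarith [hint]
    have hWtop : W (zb + r) = s := by
      by_contra hne
      have hlt : W (zb + r) < s := lt_of_le_of_ne (by
        have h0 : zb + (r:ℂ) = zb + r * Complex.exp ((0:ℝ) * Complex.I) := by simp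
        rw [h0]
        exact hleS _ (hcircA 0)) hne
      have hpos : 0 < ∫ θ in (0:ℝ)..(2*π), (s - W (zb + r * Complex.exp (θ * Complex.I))) := by
        apply intervalIntegral.integral_pos (by positivity)
        · exact (continuous_const.sub hWcirc_cont).continuousOn
        · intro θ _
          have h0 : zb + r * Complex.exp (θ * Complex.I) ∈ A := hcircA θ
          linarith [hleS _ h0]
        · refine ⟨0, ⟨le_refl _, by positivity⟩, ?_⟩
          have h0 : zb + (r:ℂ) = zb + r * Complex.exp ((0:ℝ) * Complex.I) := by simp
          rw [← h0]
          linarith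
      linarith
    have hS0top : zb + (r:ℂ) ∈ S0 := by
      constructor
      · have h0 : zb + (r:ℂ) = zb + r * Complex.exp ((0:ℝ) * Complex.I) := by simp
        rw [h0]
        exact hcircA 0
      · exact hWtop
    have hmax := hzbmax (subset_closure hS0top)
    simp only [Set.mem_setOf_eq, Complex.add_re, Complex.ofReal_re] at hmax
    linarith [hrlt.1, hmax]

section uK

variable {L : ℂ → ℂ} {σ K : ℝ}

lemma uK_cont (hLcont : ContinuousOn L {s : ℂ | σ ≤ s.re}) :
    ContinuousOn (fun z => Real.log (max ‖L z‖ (Real.exp (-K)))) {s : ℂ | σ ≤ s.re} := by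
  apply ContinuousOn.log
  · intro z hz
    exact ((hLcont.norm) z hz).max continuousWithinAt_const
  · intro z hz
    have : (0:ℝ) < Real.exp (-K) := Real.exp_pos _
    have := le_max_right ‖L z‖ (Real.exp (-K))
    positivity

lemma uK_ge (z : ℂ) : -K ≤ Real.log (max ‖L z‖ (Real.exp (-K))) := by
  have h := Real.log_le_log (Real.exp_pos (-K)) (le_max_right ‖L z‖ (Real.exp (-K)))
  rwa [Real.log_exp] at h

lemma uK_submean (hLanal : DifferentiableOn ℂ L {s : ℂ | σ < s.re})
    (hLcont : ContinuousOn L {s : ℂ | σ ≤ s.re})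
    {z₀ : ℂ} (hz₀ : σ < z₀.re) :
    ∃ r₀ : ℝ, 0 < r₀ ∧ ∀ r : ℝ, 0 < r → r < r₀ →
      Real.log (max ‖L z₀‖ (Real.exp (-K))) * (2*π)
        ≤ ∫ θ in (0:ℝ)..(2*π),
            Real.log (max ‖L (z₀ + r * Complex.exp (θ*Complex.I))‖ (Real.exp (-K))) := by
  have hopen : IsOpen {z : ℂ | σ < z.re} := isOpen_lt continuous_const Complex.continuous_re
  have hball_sub : ∀ r : ℝ, 0 < r → r < z₀.re - σ → closedBall z₀ r ⊆ {z : ℂ | σ < z.re} := by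
    intro r hr hrlt z hz
    rw [mem_closedBall, dist_eq_norm] at hz
    have h2 : |(z - z₀).re| ≤ r := (Complex.abs_re_le_norm _).trans hz
    rw [Complex.sub_re] at h2
    have := (abs_le.1 h2).1
    show σ < z.re
    linarith
  have hcont_circ : ∀ r : ℝ, 0 < r → r < z₀.re - σ →
      Continuous (fun θ : ℝ =>
        Real.log (max ‖L (z₀ + r * Complex.exp (θ*Complex.I))‖ (Real.exp (-K)))) := by
    intro r hr hrlt
    have hLc : Continuous (fun θ : ℝ => L (z₀ + r * Complex.exp (θ*Complex.I))) := by
      show Continuous (L ∘ (fun θ : ℝ => z₀ + r * Complex.exp (θ*Complex.I)))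
      refine (hLcont.mono (fun z (hz : σ < z.re) => hz.le)).comp_continuous ?_
        (fun θ => hball_sub r hr hrlt (circ_mem z₀ hr θ))
      exact continuous_const.add (continuous_const.mul
        (Complex.continuous_exp.comp (Complex.continuous_ofReal.mul continuous_const)))
    apply Continuous.log (hLc.norm.max continuous_const)
    intro θ
    have h1 : (0:ℝ) < Real.exp (-K) := Real.exp_pos _
    have h2 := le_max_right ‖L (z₀ + r * Complex.exp (θ*Complex.I))‖ (Real.exp (-K))
    positivity
  by_cases hcase : Real.exp (-K) < ‖L z₀‖
  · -- L z₀ is big; use analytic log and true mean value property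
    have hLz₀ : L z₀ ≠ 0 := by
      intro h0
      rw [h0] at hcase
      simp at hcase
      linarith [Real.exp_pos (-K), hcase]
    have hCA : ContinuousAt L z₀ := by
      apply hLcont.continuousAt
      exact Filter.mem_of_superset (hopen.mem_nhds hz₀) (fun z (hz : σ < z.re) => hz.le)
    set m := min (‖L z₀‖ - Real.exp (-K)) (‖L z₀‖/2) with hmdef
    have hm : 0 < m := by
      apply lt_min (by linarith)
      have : 0 < ‖L z₀‖ := norm_pos_iff.2 hLz₀
      linarith
    obtain ⟨r₁, hr₁, hr₁prop⟩ := Metric.continuousAt_iff.1 hCA m hm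
    set r₀ := min (r₁/2) ((z₀.re - σ)/2) with hr₀def
    have hr₀ : 0 < r₀ := lt_min (by linarith) (by linarith)
    refine ⟨r₀, hr₀, fun r hr hrlt => ?_⟩
    have hrsub : r < z₀.re - σ := by
      have := min_le_right (r₁/2) ((z₀.re - σ)/2)
      rw [hr₀def] at hrlt
      linarith
    have hrr₁ : r < r₁ := by
      have := min_le_left (r₁/2) ((z₀.re - σ)/2)
      rw [hr₀def] at hrlt
      linarith
    have hsmall : ∀ z ∈ closedBall z₀ r, ‖L z - L z₀‖ < m := by
      intro z hz
      rw [mem_closedBall] at hz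
      have : dist z z₀ < r₁ := lt_of_le_of_lt hz hrr₁
      have := hr₁prop this
      rwa [dist_eq_norm] at this
    have hLne : ∀ z ∈ closedBall z₀ r, Real.exp (-K) ≤ ‖L z‖ := by
      intro z hz
      have h1 := hsmall z hz
      have h2 : ‖L z₀‖ - ‖L z‖ ≤ ‖L z - L z₀‖ := by
        have := norm_sub_norm_le (L z₀) (L z)
        rwa [norm_sub_rev] at this
      have h3 : m ≤ ‖L z₀‖ - Real.exp (-K) := min_le_left _ _
      linarith
    have hMVP := logNormMVP hr (hLanal.mono (hball_sub r hr hrsub))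
      (fun z hz => lt_of_lt_of_le (hsmall z hz) (by
        have h3 : m ≤ ‖L z₀‖/2 := min_le_right _ _
        have : 0 < ‖L z₀‖ := norm_pos_iff.2 hLz₀
        linarith))
    have heq1 : Real.log (max ‖L z₀‖ (Real.exp (-K))) = Real.log ‖L z₀‖ := by
      rw [max_eq_left hcase.le]
    have heq2 : ∀ θ : ℝ,
        Real.log (max ‖L (z₀ + r * Complex.exp (θ*Complex.I))‖ (Real.exp (-K)))
          = Real.log ‖L (z₀ + r * Complex.exp (θ*Complex.I))‖ := by
      intro θ
      rw [max_eq_left (hLne _ (circ_mem z₀ hr θ))]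
    rw [heq1]
    have heq3 : (∫ θ in (0:ℝ)..(2*π),
        Real.log (max ‖L (z₀ + r * Complex.exp (θ*Complex.I))‖ (Real.exp (-K))))
          = 2*π*Real.log ‖L z₀‖ := by
      rw [intervalIntegral.integral_congr (fun θ _ => heq2 θ), hMVP]
    rw [heq3]
    linarith [le_refl (2*π*Real.log ‖L z₀‖)]
  · -- L z₀ is small; trivial case
    push_neg at hcase
    refine ⟨z₀.re - σ, by linarith, fun r hr hrlt => ?_⟩
    have heq : Real.log (max ‖L z₀‖ (Real.exp (-K))) = -K := by
      rw [max_eq_right hcase, Real.log_exp]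
    rw [heq]
    calc (-K) * (2*π) = ∫ θ in (0:ℝ)..(2*π), (-K : ℝ) := by
          rw [intervalIntegral.integral_const]
          simp
          ring
      _ ≤ ∫ θ in (0:ℝ)..(2*π),
            Real.log (max ‖L (z₀ + r * Complex.exp (θ*Complex.I))‖ (Real.exp (-K))) := by
          apply intervalIntegral.integral_mono_on (by positivity) intervalIntegrable_const
            ((hcont_circ r hr hrlt).intervalIntegrable _ _)
          intro θ _
          exact uK_ge _

end uK

lemma key_estimate (σ D δ K M : ℝ) (L : ℂ → ℂ) (hD : 0 < D) (hδ : 0 < δ) (hK : 0 ≤ K)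
    (hM1 : 1 ≤ M)
    (hLanal : DifferentiableOn ℂ L {s : ℂ | σ < s.re})
    (hLcont : ContinuousOn L {s : ℂ | σ ≤ s.re})
    (hnorm : ∀ z : ℂ, σ ≤ z.re → ‖L z‖ ≤ M)
    (hLc : L (σ + D + (δ/2)*Complex.I) ≠ 0) :
    (∫ t in (0:ℝ)..δ,
      (Real.log M - Real.log (max ‖L ((σ:ℂ) + t*Complex.I)‖ (Real.exp (-K)))))
      ≤ π * (D + δ^2/(4*D)) * (Real.log M - Real.log ‖L (σ + D + (δ/2)*Complex.I)‖) := by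
  have hopen : IsOpen {z : ℂ | σ < z.re} := isOpen_lt continuous_const Complex.continuous_re
  have hsubset : {z : ℂ | σ < z.re} ⊆ {z : ℂ | σ ≤ z.re} := fun z hz => show σ ≤ z.re from le_of_lt hz
  set c : ℂ := (σ:ℂ) + D + (δ/2)*Complex.I with hcdef
  have hcre : c.re = σ + D := by simp [hcdef]
  have hcim : c.im = δ/2 := by simp [hcdef]
  have hcmem : σ < c.re := by rw [hcre]; linarith
  set uK : ℂ → ℝ := fun z => Real.log (max ‖L z‖ (Real.exp (-K))) with huKdef
  set ψ : ℝ → ℝ := fun t => uK ((σ:ℂ) + t*Complex.I) with hψdef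
  set φ : ℝ → ℝ := fun t => Real.log M - ψ t with hφdef
  set Cφ : ℝ := Real.log M + K with hCφdef
  have hlogM : 0 ≤ Real.log M := Real.log_nonneg hM1
  have hexpK : Real.exp (-K) ≤ 1 := Real.exp_le_one_iff.2 (by linarith)
  have huKle : ∀ z : ℂ, σ ≤ z.re → uK z ≤ Real.log M := by
    intro z hz
    apply Real.log_le_log (lt_of_lt_of_le (Real.exp_pos _) (le_max_right _ _))
    exact max_le (hnorm z hz) (hexpK.trans hM1)
  have hψcont : Continuous ψ := by
    show Continuous (uK ∘ (fun t : ℝ => (σ:ℂ) + t*Complex.I))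
    refine (uK_cont hLcont).comp_continuous ?_ (fun t => by simp)
    exact continuous_const.add (Complex.continuous_ofReal.mul continuous_const)
  have hφcont : Continuous φ := continuous_const.sub hψcont
  have hφ0 : ∀ t, 0 ≤ φ t := by
    intro t
    have := huKle ((σ:ℂ) + t*Complex.I) (by simp)
    simp only [hφdef, hψdef]
    linarith [this]
  have hφb : ∀ t, φ t ≤ Cφ := by
    intro t
    have := uK_ge (L := L) (K := K) ((σ:ℂ) + t*Complex.I)
    simp only [hφdef, hψdef, hCφdef, huKdef]
    linarith
  have hCφ0 : 0 ≤ Cφ := by rw [hCφdef]; linarith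
  set W : ℂ → ℝ := fun z => uK z + Uc σ δ φ z with hWdef
  set c₀ : ℂ := (σ:ℂ) + (δ/2)*Complex.I with hc₀def
  -- main comparison via the maximum principle
  have hmain : ∀ z : ℂ, σ < z.re → W z ≤ Real.log M := by
    apply maxPrinciple (Mb := Real.log M + Cφ) c₀
    · -- continuity
      exact ((uK_cont hLcont).mono hsubset).add (Uc_cont hφcont)
    · -- submean
      intro z₀ hz₀
      obtain ⟨r₀, hr₀, hsm⟩ := uK_submean (K := K) hLanal hLcont hz₀
      refine ⟨min r₀ (z₀.re - σ), lt_min hr₀ (by linarith), fun r hr hrlt => ?_⟩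
      have hrr₀ : r < r₀ := lt_of_lt_of_le hrlt (min_le_left _ _)
      have hrsub : r < z₀.re - σ := lt_of_lt_of_le hrlt (min_le_right _ _)
      have hcircle_mem : ∀ θ : ℝ, σ < (z₀ + r * Complex.exp (θ*Complex.I)).re := by
        intro θ
        have := circ_re_ge (z := z₀) hr θ
        linarith
      have hcontu : Continuous (fun θ : ℝ => uK (z₀ + r * Complex.exp (θ*Complex.I))) := by
        show Continuous (uK ∘ (fun θ : ℝ => z₀ + r * Complex.exp (θ*Complex.I)))
        refine (uK_cont hLcont).comp_continuous ?_ (fun θ => hsubset (hcircle_mem θ))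
        exact continuous_const.add (continuous_const.mul
          (Complex.continuous_exp.comp (Complex.continuous_ofReal.mul continuous_const)))
      have hcontU : Continuous (fun θ : ℝ => Uc σ δ φ (z₀ + r * Complex.exp (θ*Complex.I))) := by
        show Continuous ((Uc σ δ φ) ∘ (fun θ : ℝ => z₀ + r * Complex.exp (θ*Complex.I)))
        refine (Uc_cont hφcont).comp_continuous ?_ (fun θ => hcircle_mem θ)
        exact continuous_const.add (continuous_const.mul
          (Complex.continuous_exp.comp (Complex.continuous_ofReal.mul continuous_const)))
      have hadd : (∫ θ in (0:ℝ)..(2*π), W (z₀ + r * Complex.exp (θ*Complex.I)))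
          = (∫ θ in (0:ℝ)..(2*π), uK (z₀ + r * Complex.exp (θ*Complex.I)))
            + ∫ θ in (0:ℝ)..(2*π), Uc σ δ φ (z₀ + r * Complex.exp (θ*Complex.I)) := by
        rw [← intervalIntegral.integral_add (hcontu.intervalIntegrable _ _)
          (hcontU.intervalIntegrable _ _)]
      rw [hadd]
      have h1 := hsm r hr hrr₀
      have h2 := Uc_MVP hφcont hδ hr (by linarith : σ + r < z₀.re)
      simp only [hWdef]
      linarith [h1, h2]
    · -- bounded
      intro z hz
      exact add_le_add (huKle z hz.le) (Uc_le hφcont hδ hφ0 hφb hz)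
    · -- boundary
      intro ζ hζ ε hε
      obtain ⟨η, hη, x₀, hx₀, hUb⟩ := Uc_boundary hφcont hδ hφ0 hφb ζ.im (half_pos hε)
      have hζeq : ζ = (σ:ℂ) + ζ.im*Complex.I := by
        apply Complex.ext <;> simp [hζ]
      have hψζ : uK ζ = ψ ζ.im := by
        show uK ζ = uK ((σ:ℂ) + (ζ.im:ℝ)*Complex.I)
        rw [← hζeq]
      have hζs : ζ ∈ {z : ℂ | σ ≤ z.re} := le_of_eq hζ.symm
      have hcw : ContinuousWithinAt uK {z : ℂ | σ ≤ z.re} ζ := (uK_cont hLcont) ζ hζs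
      have hpre : {z : ℂ | uK z < uK ζ + ε/2} ∈
          nhdsWithin ζ {z : ℂ | σ ≤ z.re} := hcw (Iio_mem_nhds (by linarith))
      obtain ⟨O, hOopen, hζO, hOsub⟩ := mem_nhdsWithin.1 hpre
      set V : Set ℂ := O ∩ ({z : ℂ | z.re < σ + x₀} ∩ {z : ℂ | |z.im - ζ.im| < η}) with hVdef
      have hVmem : V ∈ nhds ζ := by
        apply Filter.inter_mem (hOopen.mem_nhds hζO)
        apply Filter.inter_mem
        · exact (isOpen_lt Complex.continuous_re continuous_const).mem_nhds
            (by simp only [Set.mem_setOf_eq, hζ]; linarith)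
        · refine (isOpen_lt (Complex.continuous_im.sub continuous_const).abs
            continuous_const).mem_nhds ?_
          simp only [Set.mem_setOf_eq, Pi.sub_apply, sub_self, abs_zero]
          exact hη
      refine ⟨V, hVmem, fun z hzV hzre => ?_⟩
      have h1 : uK z < uK ζ + ε/2 := hOsub ⟨hzV.1, hzre.le⟩
      have h2 : Uc σ δ φ z ≤ φ ζ.im + ε/2 := hUb z hzre hzV.2.1 hzV.2.2
      have h3 : uK ζ + φ ζ.im = Real.log M := by
        rw [hψζ, hφdef]; ring
      simp only [hWdef]
      have : uK ζ + φ ζ.im = Real.log M := h3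
      linarith [h1, h2]
    · -- far away
      intro ε hε
      set d₀ : ℝ := (Cφ+1)*δ/(π*ε) + 1 with hd₀def
      have hd₀ : 0 < d₀ := by
        rw [hd₀def]
        have h0 : 0 ≤ (Cφ+1)*δ/(π*ε) :=
          div_nonneg (mul_nonneg (by linarith) hδ.le) (by positivity)
        linarith
      have h5 : (Cφ + 1) * δ / (π * ε) ≤ d₀ := by rw [hd₀def]; linarith
      clear_value d₀
      refine ⟨d₀ + δ/2, by linarith, fun z hzre hzfar => ?_⟩
      have hdist : ∀ t ∈ Set.Icc (0:ℝ) δ, d₀ ≤ ‖z - ((σ:ℂ) + t*Complex.I)‖ := by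
        intro t ht
        have h1 : ‖c₀ - ((σ:ℂ) + t*Complex.I)‖ ≤ δ/2 := by
          have : c₀ - ((σ:ℂ) + t*Complex.I) = ((δ/2 - t : ℝ):ℂ)*Complex.I := by
            rw [hc₀def]
            push_cast
            ring
          rw [this]
          rw [norm_mul, Complex.norm_I, Complex.norm_real, Real.norm_eq_abs, mul_one]
          rw [abs_le]
          constructor <;> [linarith [ht.2]; linarith [ht.1]]
        have h2 : ‖z - c₀‖ - ‖c₀ - ((σ:ℂ) + t*Complex.I)‖ ≤ ‖z - ((σ:ℂ) + t*Complex.I)‖ := by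
          have := norm_sub_le (z - ((σ:ℂ) + t*Complex.I)) (c₀ - ((σ:ℂ) + t*Complex.I))
          have heq : z - ((σ:ℂ) + t*Complex.I) - (c₀ - ((σ:ℂ) + t*Complex.I)) = z - c₀ := by ring
          rw [heq] at this
          linarith
        have h3 : d₀ + δ/2 ≤ ‖z - c₀‖ := by
          rwa [dist_eq_norm] at hzfar
        linarith
      have hfar2 := Uc_far hφcont hδ hφ0 hφb hzre hd₀ hdist
      have h4 : Cφ * δ / (π * d₀) ≤ ε := by
        rw [div_le_iff₀ (by positivity)]
        have h6 : (Cφ+1)*δ = ε * (π * ((Cφ+1)*δ/(π*ε))) := by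
          field_simp
        calc Cφ * δ ≤ (Cφ+1)*δ := by nlinarith
          _ = ε * (π * ((Cφ+1)*δ/(π*ε))) := h6
          _ ≤ ε * (π * d₀) := by
              apply mul_le_mul_of_nonneg_left _ hε.le
              exact mul_le_mul_of_nonneg_left h5 Real.pi_pos.le
      simp only [hWdef]
      have h7 := huKle z hzre.le
      linarith [hfar2]
  -- evaluate at c
  have hWc := hmain c hcmem
  have huKc : Real.log ‖L c‖ ≤ uK c :=
    Real.log_le_log (norm_pos_iff.2 hLc) (le_max_left _ _)
  have hUcc : Uc σ δ φ c ≤ Real.log M - Real.log ‖L c‖ := by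
    simp only [hWdef] at hWc
    linarith
  -- kernel lower bound
  set κ : ℝ := (π * (D + δ^2/(4*D)))⁻¹ with hκdef
  have hκpos : 0 < κ := by
    rw [hκdef]
    apply inv_pos.2
    apply mul_pos Real.pi_pos
    positivity
  have hker : ∀ t ∈ Set.Icc (0:ℝ) δ, κ ≤ Pker σ c t := by
    intro t ht
    unfold Pker
    rw [hcre, hcim, hκdef]
    have h1 : (δ/2 - t)^2 ≤ (δ/2)^2 :=
      sq_le_sq' (by linarith [ht.2]) (by linarith [ht.1])
    have h2 : σ + D - σ = D := by ring
    rw [h2]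
    rw [div_div, inv_eq_one_div, div_le_div_iff₀ (by positivity) (by positivity)]
    have h3 : (D^2 + (δ/2 - t)^2) ≤ D * (D + δ^2/(4*D)) := by
      have : D * (D + δ^2/(4*D)) = D^2 + δ^2/4 := by field_simp
      rw [this]
      nlinarith
    nlinarith [Real.pi_pos]
  have hlow : κ * ∫ t in (0:ℝ)..δ, φ t ≤ Uc σ δ φ c := by
    rw [← intervalIntegral.integral_const_mul]
    apply intervalIntegral.integral_mono_on hδ.le
      ((continuous_const.mul hφcont).intervalIntegrable _ _)
      (Uc_integrand_intble hφcont hcmem 0 δ)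
    intro t ht
    rw [mul_comm (φ t) (Pker σ c t)]
    exact mul_le_mul_of_nonneg_right (hker t ht) (hφ0 t)
  have hfinal : ∫ t in (0:ℝ)..δ, φ t ≤ (Real.log M - Real.log ‖L c‖) / κ := by
    rw [le_div_iff₀ hκpos]
    calc (∫ t in (0:ℝ)..δ, φ t) * κ = κ * ∫ t in (0:ℝ)..δ, φ t := by ring
      _ ≤ Uc σ δ φ c := hlow
      _ ≤ Real.log M - Real.log ‖L c‖ := hUcc
  have hκinv : (Real.log M - Real.log ‖L c‖) / κ
      = π * (D + δ^2/(4*D)) * (Real.log M - Real.log ‖L c‖) := by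
    rw [hκdef, div_eq_mul_inv, inv_inv]
    ring
  rw [hκinv] at hfinal
  exact hfinal

open MeasureTheory in
theorem stmt_14 (lam : ℕ → ℝ) (hlam0 : lam 0 = 0) (hmono : StrictMono lam)
    (a : ℕ → ℂ) (ha0 : a 0 = 1) (σ : ℝ)
    (ha : Summable fun n : ℕ => ‖a n‖ * Real.exp (-lam n * σ))
    (L : ℂ → ℂ)
    (hL : ∀ s : ℂ, σ ≤ s.re → L s = ∑' n : ℕ, a n * Complex.exp (-(lam n : ℂ) * s))
    (hLanal : DifferentiableOn ℂ L {s : ℂ | σ < s.re})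
    (hLcont : ContinuousOn L {s : ℂ | σ ≤ s.re})
    (ξ D δ : ℝ) (hξ : 0 < ξ) (hD : 0 < D) (hδ : 0 < δ)
    (hlow : ∀ s : ℂ, σ + D ≤ s.re → ξ ≤ ‖L s‖) :
    ∫ t in (0 : ℝ)..δ, max (-Real.log ‖L (σ + t * Complex.I)‖) 0 ≤
      Real.pi * (D + δ ^ 2 / (4 * D)) *
        (Real.log (∑' n : ℕ, ‖a n‖ * Real.exp (-lam n * σ)) -
          Real.log ‖L (σ + D + (δ / 2) * Complex.I)‖) := by
  set M : ℝ := ∑' n : ℕ, ‖a n‖ * Real.exp (-lam n * σ) with hMdef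
  have hlam_nn : ∀ n, 0 ≤ lam n := by
    intro n
    have := hmono.monotone (Nat.zero_le n)
    rwa [hlam0] at this
  have hM1 : 1 ≤ M := by
    have h0 : ‖a 0‖ * Real.exp (-lam 0 * σ) = 1 := by
      rw [ha0, hlam0]; simp
    have := Summable.le_tsum ha 0 (fun j _ => by positivity)
    rwa [h0] at this
  have hnorm : ∀ z : ℂ, σ ≤ z.re → ‖L z‖ ≤ M := by
    intro z hz
    rw [hL z hz]
    have hsummand : ∀ n, ‖a n * Complex.exp (-(lam n : ℂ) * z)‖
        = ‖a n‖ * Real.exp (-lam n * z.re) := by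
      intro n
      rw [norm_mul, Complex.norm_exp]
      congr 2
      simp
    have hptle : ∀ n, ‖a n‖ * Real.exp (-lam n * z.re) ≤ ‖a n‖ * Real.exp (-lam n * σ) := by
      intro n
      apply mul_le_mul_of_nonneg_left _ (norm_nonneg _)
      apply Real.exp_le_exp.2
      have := hlam_nn n
      nlinarith
    have hsummable2 : Summable (fun n => ‖a n‖ * Real.exp (-lam n * z.re)) :=
      Summable.of_nonneg_of_le (fun n => by positivity) hptle ha
    calc ‖∑' n : ℕ, a n * Complex.exp (-(lam n : ℂ) * z)‖
        ≤ ∑' n : ℕ, ‖a n * Complex.exp (-(lam n : ℂ) * z)‖ := by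
          apply norm_tsum_le_tsum_norm
          rw [summable_congr hsummand]
          exact hsummable2
      _ = ∑' n : ℕ, ‖a n‖ * Real.exp (-lam n * z.re) := tsum_congr hsummand
      _ ≤ M := Summable.tsum_le_tsum hptle hsummable2 ha
  set c : ℂ := (σ:ℂ) + D + (δ/2)*Complex.I with hcdef
  have hcre : c.re = σ + D := by simp [hcdef]
  have hLc_norm : ξ ≤ ‖L c‖ := hlow c (by rw [hcre])
  have hLc : L c ≠ 0 := by
    intro h
    rw [h, norm_zero] at hLc_norm
    linarith
  have hlogM : 0 ≤ Real.log M := Real.log_nonneg hM1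
  set RHS : ℝ := π * (D + δ^2/(4*D)) * (Real.log M - Real.log ‖L c‖) with hRHSdef
  have hkey : ∀ n : ℕ,
      (∫ t in (0:ℝ)..δ,
        (Real.log M - Real.log (max ‖L ((σ:ℂ) + t*Complex.I)‖ (Real.exp (-(n:ℝ))))))
        ≤ RHS :=
    fun n => key_estimate σ D δ n M L hD hδ (Nat.cast_nonneg n) hM1 hLanal hLcont hnorm hLc
  have hLline : Continuous (fun t : ℝ => L ((σ:ℂ) + t*Complex.I)) := by
    show Continuous (L ∘ (fun t : ℝ => (σ:ℂ) + t*Complex.I))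
    refine hLcont.comp_continuous ?_ (fun t => by simp)
    exact continuous_const.add (Complex.continuous_ofReal.mul continuous_const)
  have hΦcont : ∀ n : ℕ, Continuous (fun t : ℝ =>
      Real.log M - Real.log (max ‖L ((σ:ℂ) + t*Complex.I)‖ (Real.exp (-(n:ℝ))))) := by
    intro n
    apply Continuous.sub continuous_const
    apply Continuous.log (hLline.norm.max continuous_const)
    intro t
    have h1 : (0:ℝ) < Real.exp (-(n:ℝ)) := Real.exp_pos _
    have h2 := le_max_right ‖L ((σ:ℂ) + t*Complex.I)‖ (Real.exp (-(n:ℝ)))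
    positivity
  have hΦnonneg : ∀ (n : ℕ) (t : ℝ), 0 ≤
      Real.log M - Real.log (max ‖L ((σ:ℂ) + t*Complex.I)‖ (Real.exp (-(n:ℝ)))) := by
    intro n t
    have hle : max ‖L ((σ:ℂ) + t*Complex.I)‖ (Real.exp (-(n:ℝ))) ≤ M := by
      apply max_le (hnorm _ (by simp))
      exact (Real.exp_le_one_iff.2 (neg_nonpos.2 (Nat.cast_nonneg n))).trans hM1
    have := Real.log_le_log (lt_of_lt_of_le (Real.exp_pos _) (le_max_right _ _)) hle
    linarith
  have hRHS0 : 0 ≤ RHS := by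
    have h1 : 0 ≤ ∫ t in (0:ℝ)..δ,
        (Real.log M - Real.log (max ‖L ((σ:ℂ) + t*Complex.I)‖ (Real.exp (-((0:ℕ):ℝ))))) :=
      intervalIntegral.integral_nonneg hδ.le (fun t _ => hΦnonneg 0 t)
    exact le_trans h1 (hkey 0)
  have hTmeas : Measurable (fun t : ℝ => max (-Real.log ‖L ((σ:ℂ) + t*Complex.I)‖) 0) := by
    apply Measurable.max _ measurable_const
    exact (Real.measurable_log.comp hLline.norm.measurable).neg
  have hptwise : ∀ t : ℝ, ∀ᶠ n : ℕ in Filter.atTop,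
      ENNReal.ofReal (max (-Real.log ‖L ((σ:ℂ) + t*Complex.I)‖) 0)
        ≤ ENNReal.ofReal
          (Real.log M - Real.log (max ‖L ((σ:ℂ) + t*Complex.I)‖ (Real.exp (-(n:ℝ))))) := by
    intro t
    set v := ‖L ((σ:ℂ) + t*Complex.I)‖ with hvdef
    rcases eq_or_lt_of_le (norm_nonneg (L ((σ:ℂ) + t*Complex.I))) with hv0 | hv0
    · apply Filter.Eventually.of_forall
      intro n
      have hT0 : max (-Real.log v) 0 = 0 := by
        rw [hvdef, ← hv0, Real.log_zero, neg_zero, max_self]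
      rw [hT0]
      simp only [ENNReal.ofReal_zero]
      exact zero_le
    · have hvM : v ≤ M := hnorm _ (by simp)
      have hlogv : Real.log v ≤ Real.log M := Real.log_le_log hv0 hvM
      filter_upwards [Filter.eventually_ge_atTop (Nat.ceil (-Real.log v))] with n hn
      have hexp : Real.exp (-(n:ℝ)) ≤ v := by
        have h1 : -Real.log v ≤ (n:ℝ) := by
          calc -Real.log v ≤ (Nat.ceil (-Real.log v) : ℝ) := Nat.le_ceil _
            _ ≤ (n:ℝ) := by exact_mod_cast hn
        calc Real.exp (-(n:ℝ)) ≤ Real.exp (Real.log v) := Real.exp_le_exp.2 (by linarith)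
          _ = v := Real.exp_log hv0
      have hmax : max v (Real.exp (-(n:ℝ))) = v := max_eq_left hexp
      apply ENNReal.ofReal_le_ofReal
      rw [hmax]
      apply max_le (by linarith) (by linarith)
  set μ : MeasureTheory.Measure ℝ := MeasureTheory.volume.restrict (Set.Ioc 0 δ) with hμdef
  have hΦlint : ∀ n : ℕ, (∫⁻ t, ENNReal.ofReal
      (Real.log M - Real.log (max ‖L ((σ:ℂ) + t*Complex.I)‖ (Real.exp (-(n:ℝ))))) ∂μ)
        ≤ ENNReal.ofReal RHS := by
    intro n
    have hint : MeasureTheory.Integrable (fun t : ℝ =>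
        Real.log M - Real.log (max ‖L ((σ:ℂ) + t*Complex.I)‖ (Real.exp (-(n:ℝ))))) μ := by
      rw [hμdef]
      exact (hΦcont n).integrableOn_Ioc
    rw [← MeasureTheory.ofReal_integral_eq_lintegral_ofReal hint
      (Filter.Eventually.of_forall (fun t => hΦnonneg n t))]
    apply ENNReal.ofReal_le_ofReal
    have heq : (∫ t, (Real.log M
        - Real.log (max ‖L ((σ:ℂ) + t*Complex.I)‖ (Real.exp (-(n:ℝ))))) ∂μ)
          = ∫ t in (0:ℝ)..δ,
            (Real.log M - Real.log (max ‖L ((σ:ℂ) + t*Complex.I)‖ (Real.exp (-(n:ℝ))))) := by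
      rw [hμdef, intervalIntegral.integral_of_le hδ.le]
    rw [heq]
    exact hkey n
  have hTlint : (∫⁻ t, ENNReal.ofReal (max (-Real.log ‖L ((σ:ℂ) + t*Complex.I)‖) 0) ∂μ)
      ≤ ENNReal.ofReal RHS := by
    calc (∫⁻ t, ENNReal.ofReal (max (-Real.log ‖L ((σ:ℂ) + t*Complex.I)‖) 0) ∂μ)
        ≤ ∫⁻ t, Filter.liminf (fun n : ℕ => ENNReal.ofReal
            (Real.log M - Real.log (max ‖L ((σ:ℂ) + t*Complex.I)‖ (Real.exp (-(n:ℝ))))))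
            Filter.atTop ∂μ := by
          apply MeasureTheory.lintegral_mono
          intro t
          exact Filter.le_liminf_of_le (by isBoundedDefault) (hptwise t)
      _ ≤ Filter.liminf (fun n : ℕ => ∫⁻ t, ENNReal.ofReal
            (Real.log M - Real.log (max ‖L ((σ:ℂ) + t*Complex.I)‖ (Real.exp (-(n:ℝ))))) ∂μ)
            Filter.atTop := by
          apply MeasureTheory.lintegral_liminf_le
          intro n
          exact ENNReal.measurable_ofReal.comp (hΦcont n).measurable
      _ ≤ Filter.liminf (fun _ : ℕ => ENNReal.ofReal RHS) Filter.atTop :=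
          Filter.liminf_le_liminf (Filter.Eventually.of_forall hΦlint)
      _ = ENNReal.ofReal RHS := Filter.liminf_const _
  have hTnn : 0 ≤ᵐ[μ] (fun t : ℝ => max (-Real.log ‖L ((σ:ℂ) + t*Complex.I)‖) 0) :=
    Filter.Eventually.of_forall (fun t => le_max_right _ _)
  have hTint_eq : (∫ t, max (-Real.log ‖L ((σ:ℂ) + t*Complex.I)‖) 0 ∂μ)
      = (∫⁻ t, ENNReal.ofReal (max (-Real.log ‖L ((σ:ℂ) + t*Complex.I)‖) 0) ∂μ).toReal :=
    MeasureTheory.integral_eq_lintegral_of_nonneg_ae hTnn hTmeas.aestronglyMeasurable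
  have hfin : (∫ t, max (-Real.log ‖L ((σ:ℂ) + t*Complex.I)‖) 0 ∂μ) ≤ RHS := by
    rw [hTint_eq]
    calc (∫⁻ t, ENNReal.ofReal (max (-Real.log ‖L ((σ:ℂ) + t*Complex.I)‖) 0) ∂μ).toReal
        ≤ (ENNReal.ofReal RHS).toReal := ENNReal.toReal_mono ENNReal.ofReal_ne_top hTlint
      _ = RHS := ENNReal.toReal_ofReal hRHS0
  rw [intervalIntegral.integral_of_le hδ.le]
  exact hfin

end
end
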